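/- (Schlesinger transformation T₂ for Painlevé III′.) Let (q, p, H) solve the Painlevé III′ Hamiltonian system with parameters v1, v2 ∈ ℂ on an open set U ⊆ ℂ with 0 ∉ U, and assume q(s) ≠ 0 and q(s)·(q(s)·p(s) − (v1+v2)/2) + s ≠ 0 for all s ∈ U. Define p̃(s) := (q(s)/s)·((v1+v2)/2 − q(s)·p(s)) and q̃(s) := s/q(s) − ((2 + v1 − v2)/2)·s / ( q(s)·(q(s)·p(s) − (v1+v2)/2) + s ). Then (q̃, p̃) solves the Painlevé III′ Hamiltonian system with parameters (v1 + 1, v2 − 1) on U, and its Hamiltonian H̃ satisfies s·H̃(s) = s·H(s) − q(s)·p(s) for all s ∈ U. -/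

import Mathlib

/-
The Schlesinger transformation `T₂` is a rational change of variables `(q, p) ↦ (q̃, p̃)` with
coefficients rational in `s`. Computing `q̃'` and `p̃'` by the chain rule and substituting `s q'` and
`s p'` from Hamilton's equations, both transformed equations and the relation between the
Hamiltonians become identities of rational functions in `(s, q, p)`, valid wherever `s`, `q` and
`d = q (q p - (v1 + v2) / 2) + s` do not vanish.
-/

open Complex

/-- `(q, p, H)` solves the Painlevé III′ Hamiltonian system with parameters
`v1, v2` on an open set `U ⊆ ℂ` with `0 ∉ U`. -/
def SolvesPIII' (v1 v2 : ℂ) (U : Set ℂ) (q p H : ℂ → ℂ) : Prop :=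
  IsOpen U ∧ (0 : ℂ) ∉ U ∧
    DifferentiableOn ℂ q U ∧ DifferentiableOn ℂ p U ∧
    (∀ s ∈ U, s * H s =
      q s ^ 2 * p s ^ 2 - (q s ^ 2 + v1 * q s - s) * p s
        + (1 / 2) * (v1 + v2) * q s) ∧
    (∀ s ∈ U, s * deriv q s = 2 * q s ^ 2 * p s - q s ^ 2 - v1 * q s + s) ∧
    (∀ s ∈ U, s * deriv p s =
      -2 * q s * p s ^ 2 + 2 * q s * p s + v1 * p s - (1 / 2) * (v1 + v2))

open Filter Topology

namespace PIII'

noncomputable section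

/- `sHamiltonian` is `s · H(s)`; `qRhs` and `pRhs` are the right-hand sides of Hamilton's
equations for `s · q'` and `s · p'`. -/
def sHamiltonian (v1 v2 s q p : ℂ) : ℂ :=
  q ^ 2 * p ^ 2 - (q ^ 2 + v1 * q - s) * p + (1 / 2) * (v1 + v2) * q

def qRhs (v1 s q p : ℂ) : ℂ := 2 * q ^ 2 * p - q ^ 2 - v1 * q + s

def pRhs (v1 v2 q p : ℂ) : ℂ := -2 * q * p ^ 2 + 2 * q * p + v1 * p - (1 / 2) * (v1 + v2)

def t2Denom (v1 v2 s q p : ℂ) : ℂ := q * (q * p - (v1 + v2) / 2) + s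

def t2Q (v1 v2 s q p : ℂ) : ℂ := s / q - ((2 + v1 - v2) / 2) * s / t2Denom v1 v2 s q p

def t2P (v1 v2 s q p : ℂ) : ℂ := (q / s) * ((v1 + v2) / 2 - q * p)

end

section Pointwise

/- Solving for `p` in terms of `d = t2Denom` turns every identity below into one between rational
functions of `(s, q, d)` whose only denominators are `s`, `q` and `d`. -/
theorem eq_of_t2Denom (v1 v2 s : ℂ) {q : ℂ} (p : ℂ) (hq : q ≠ 0) :
    p = ((t2Denom v1 v2 s q p - s) / q + (v1 + v2) / 2) / q := by
  unfold t2Denom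
  field_simp
  ring

variable {v1 v2 s q p : ℂ}

theorem sHamiltonian_t2 (hs : s ≠ 0) (hq : q ≠ 0) (hd : t2Denom v1 v2 s q p ≠ 0) :
    sHamiltonian (v1 + 1) (v2 - 1) s (t2Q v1 v2 s q p) (t2P v1 v2 s q p) =
      sHamiltonian v1 v2 s q p - q * p := by
  have hp := eq_of_t2Denom v1 v2 s p hq
  unfold sHamiltonian t2Q t2P
  generalize t2Denom v1 v2 s q p = d at *
  subst hp
  field_simp
  ring

/- The right-hand sides of `qRhs_t2` and `pRhs_t2` are the chain-rule derivatives of `t2Q` and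
`t2P` along `q' = qRhs / s`, `p' = pRhs / s`. -/
theorem qRhs_t2 (hs : s ≠ 0) (hq : q ≠ 0) (hd : t2Denom v1 v2 s q p ≠ 0) :
    qRhs (v1 + 1) s (t2Q v1 v2 s q p) (t2P v1 v2 s q p) / s =
      (1 * q - s * (qRhs v1 s q p / s)) / q ^ 2 -
      ((2 + v1 - v2) / 2 * 1 * t2Denom v1 v2 s q p - (2 + v1 - v2) / 2 * s *
        (qRhs v1 s q p / s * (q * p - (v1 + v2) / 2) +
          q * (qRhs v1 s q p / s * p + q * (pRhs v1 v2 q p / s)) + 1)) /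
        t2Denom v1 v2 s q p ^ 2 := by
  have hp := eq_of_t2Denom v1 v2 s p hq
  unfold qRhs pRhs t2Q t2P
  generalize t2Denom v1 v2 s q p = d at *
  subst hp
  field_simp
  ring

theorem pRhs_t2 (hs : s ≠ 0) (hq : q ≠ 0) (hd : t2Denom v1 v2 s q p ≠ 0) :
    pRhs (v1 + 1) (v2 - 1) (t2Q v1 v2 s q p) (t2P v1 v2 s q p) / s =
      (qRhs v1 s q p / s * s - q * 1) / s ^ 2 * ((v1 + v2) / 2 - q * p) +
        q / s * (0 - (qRhs v1 s q p / s * p + q * (pRhs v1 v2 q p / s))) := by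
  have hp := eq_of_t2Denom v1 v2 s p hq
  unfold qRhs pRhs t2Q t2P
  generalize t2Denom v1 v2 s q p = d at *
  subst hp
  field_simp
  ring

end Pointwise

def SolvesAt (v1 v2 : ℂ) (q p : ℂ → ℂ) (s : ℂ) : Prop :=
  HasDerivAt q (qRhs v1 s (q s) (p s) / s) s ∧ HasDerivAt p (pRhs v1 v2 (q s) (p s) / s) s

section Flow

variable {v1 v2 s : ℂ} {q p : ℂ → ℂ}

theorem hasDerivAt_t2Denom {dq dp : ℂ} (hq : HasDerivAt q dq s) (hp : HasDerivAt p dp s) :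
    HasDerivAt (fun t ↦ t2Denom v1 v2 t (q t) (p t))
      (dq * (q s * p s - (v1 + v2) / 2) + q s * (dq * p s + q s * dp) + 1) s :=
  (hq.mul ((hq.mul hp).sub_const _)).add (hasDerivAt_id s)

theorem SolvesAt.t2 (h : SolvesAt v1 v2 q p s) (hs : s ≠ 0) (hq : q s ≠ 0)
    (hd : t2Denom v1 v2 s (q s) (p s) ≠ 0) :
    SolvesAt (v1 + 1) (v2 - 1) (fun t ↦ t2Q v1 v2 t (q t) (p t))
      (fun t ↦ t2P v1 v2 t (q t) (p t)) s := by
  obtain ⟨hqd, hpd⟩ := h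
  constructor
  · exact (((hasDerivAt_id s).div hqd hq).sub (((hasDerivAt_id s).const_mul _).div
      (hasDerivAt_t2Denom hqd hpd) hd)).congr_deriv (qRhs_t2 hs hq hd).symm
  · exact ((hqd.div (hasDerivAt_id s) hs).mul ((hasDerivAt_const s _).sub
      (hqd.mul hpd))).congr_deriv (pRhs_t2 hs hq hd).symm

theorem SolvesAt.congr_of_eventuallyEq {q' p' : ℂ → ℂ} (h : SolvesAt v1 v2 q p s)
    (hq : q' =ᶠ[𝓝 s] q) (hp : p' =ᶠ[𝓝 s] p) : SolvesAt v1 v2 q' p' s := by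
  unfold SolvesAt
  rw [hq.eq_of_nhds, hp.eq_of_nhds]
  exact ⟨h.1.congr_of_eventuallyEq hq, h.2.congr_of_eventuallyEq hp⟩

end Flow

end PIII'

open PIII'

section Solutions

variable {v1 v2 : ℂ} {U : Set ℂ} {q p H : ℂ → ℂ}

theorem SolvesPIII'.solvesAt (h : SolvesPIII' v1 v2 U q p H) {s : ℂ} (hs : s ∈ U) :
    SolvesAt v1 v2 q p s := by
  obtain ⟨hU, h0, hqd, hpd, -, hq, hp⟩ := h
  have hs0 : s ≠ 0 := fun h ↦ h0 (h ▸ hs)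
  have hasDerivAt {f : ℂ → ℂ} {r : ℂ} (hf : DifferentiableOn ℂ f U) (hr : s * deriv f s = r) :
      HasDerivAt f (r / s) s := by
    rw [← hr, mul_div_cancel_left₀ _ hs0]
    exact (hf.differentiableAt (hU.mem_nhds hs)).hasDerivAt
  exact ⟨hasDerivAt hqd (hq s hs), hasDerivAt hpd (hp s hs)⟩

theorem solvesPIII'_of_solvesAt (hU : IsOpen U) (h0 : (0 : ℂ) ∉ U)
    (h : ∀ s ∈ U, SolvesAt v1 v2 q p s) :
    SolvesPIII' v1 v2 U q p (fun s ↦ sHamiltonian v1 v2 s (q s) (p s) / s) := by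
  have hs0 : ∀ s ∈ U, s ≠ 0 := fun s hs h ↦ h0 (h ▸ hs)
  refine ⟨hU, h0, fun s hs ↦ (h s hs).1.differentiableAt.differentiableWithinAt,
    fun s hs ↦ (h s hs).2.differentiableAt.differentiableWithinAt, fun s hs ↦ ?_,
    fun s hs ↦ ?_, fun s hs ↦ ?_⟩
  · exact mul_div_cancel₀ _ (hs0 s hs)
  · rw [(h s hs).1.deriv]
    exact mul_div_cancel₀ _ (hs0 s hs)
  · rw [(h s hs).2.deriv]
    exact mul_div_cancel₀ _ (hs0 s hs)

end Solutions

/-- Schlesinger transformation `T₂` for Painlevé III′: it maps a solution with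
parameters `(v1, v2)` to one with parameters `(v1+1, v2−1)`, and acts on the
Hamiltonian by `s·H̃(s) = s·H(s) − q(s)p(s)`. -/
theorem painleveIIIprime_schlesinger_T2 (v1 v2 : ℂ) (U : Set ℂ)
    (q p H : ℂ → ℂ)
    (hsol : SolvesPIII' v1 v2 U q p H)
    (hq : ∀ s ∈ U, q s ≠ 0)
    (hden : ∀ s ∈ U, q s * (q s * p s - (v1 + v2) / 2) + s ≠ 0)
    (qt pt : ℂ → ℂ)
    (hpt : ∀ s ∈ U, pt s = (q s / s) * ((v1 + v2) / 2 - q s * p s))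
    (hqt : ∀ s ∈ U, qt s =
      s / q s - ((2 + v1 - v2) / 2) * s /
        (q s * (q s * p s - (v1 + v2) / 2) + s)) :
    ∃ Ht : ℂ → ℂ,
      SolvesPIII' (v1 + 1) (v2 - 1) U qt pt Ht ∧
      ∀ s ∈ U, s * Ht s = s * H s - q s * p s := by
  have ⟨hU, h0, _, _, hH, _⟩ := hsol
  have hs0 : ∀ s ∈ U, s ≠ 0 := fun s hs h ↦ h0 (h ▸ hs)
  refine ⟨_, solvesPIII'_of_solvesAt hU h0 fun s hs ↦ ?_, fun s hs ↦ ?_⟩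
  · exact ((hsol.solvesAt hs).t2 (hs0 s hs) (hq s hs) (hden s hs)).congr_of_eventuallyEq
      (eventually_of_mem (hU.mem_nhds hs) hqt) (eventually_of_mem (hU.mem_nhds hs) hpt)
  · rw [mul_div_cancel₀ _ (hs0 s hs), hqt s hs, hpt s hs]
    exact (sHamiltonian_t2 (hs0 s hs) (hq s hs) (hden s hs)).trans
      (congrArg (· - _) (hH s hs).symm)
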